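/- arXiv:2007.07605 — 4 statements merged into one kernel-verified Lean document; each statement's English description precedes it below -/
import Mathlib

section
/- Let $X$ be a random variable with values in $\mathbb{N}_0$ and let $X_0, X_1, X_2, \ldots$ be independent random variables each having the same distribution as $X$. Set $M := \sup\{-j + X_j : j \in \mathbb{N}_0\}$. Then $\mathbb{E}(M) = \infty$ if and only if $\mathbb{E}(X^2) = \infty$. -/
/-!
Write `a k = P(k < X)`. The event `{m < M}` is the union over `j` of the independent events
`{j + m < X_j}`, whose probabilities sum to the tail `s m = ∑ⱼ a (j + m)`. The union bound gives
`P(m < M) ≤ s m`, and independence gives `min (s m) 1 ≤ 2 P(m < M)`, because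
`∏ (1 - pᵢ) * (1 + ∑ pᵢ) ≤ 1`; the `min` is harmless since the tails are either all infinite or
all bounded. As `𝔼 M ≤ ∑ₘ P(m < M) ≤ 𝔼 M + 1`, `𝔼 M` is finite iff `∑ₘ s m` is, and
`∑ₘ s m = 𝔼 [X (X + 1) / 2]` is comparable to `𝔼 [X²]`.
-/

open MeasureTheory ProbabilityTheory Finset
open scoped ENNReal

theorem Finset.sum_range_sub_mul_two (n : ℕ) :
    (∑ m ∈ range n, (n - m)) * 2 = n * (n + 1) := by
  induction n with
  | zero => simp
  | succ n ih =>
    rw [sum_range_succ', add_mul]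
    simp only [Nat.add_sub_add_right, Nat.sub_zero]
    rw [ih]
    ring

namespace ENNReal

theorem tsum_ite_natCast_lt_eq_ceil {x : ℝ≥0∞} (hx : x ≠ ∞) :
    ∑' m : ℕ, (if (m : ℝ≥0∞) < x then (1 : ℝ≥0∞) else 0) = (⌈x.toNNReal⌉₊ : ℝ≥0∞) := by
  have hlt : ∀ m : ℕ, (m : ℝ≥0∞) < x ↔ m < ⌈x.toNNReal⌉₊ := fun m => by
    rw [Nat.lt_ceil, ← coe_lt_coe, coe_toNNReal hx, coe_natCast]
  rw [tsum_eq_sum (s := range ⌈x.toNNReal⌉₊)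
    fun m hm => if_neg ((hlt m).not.mpr (by simpa using hm)),
    sum_congr rfl fun m hm => if_pos ((hlt m).mpr (mem_range.mp hm))]
  simp

theorem le_tsum_ite_natCast_lt (x : ℝ≥0∞) :
    x ≤ ∑' m : ℕ, (if (m : ℝ≥0∞) < x then (1 : ℝ≥0∞) else 0) := by
  rcases eq_or_ne x ∞ with rfl | hx
  · simp
  rw [tsum_ite_natCast_lt_eq_ceil hx, ← coe_toNNReal hx, ← coe_natCast, coe_le_coe]
  exact Nat.le_ceil _

theorem tsum_ite_natCast_lt_le_add_one (x : ℝ≥0∞) :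
    ∑' m : ℕ, (if (m : ℝ≥0∞) < x then (1 : ℝ≥0∞) else 0) ≤ x + 1 := by
  rcases eq_or_ne x ∞ with rfl | hx
  · simp
  rw [tsum_ite_natCast_lt_eq_ceil hx, ← coe_toNNReal hx, ← coe_natCast, ← coe_one, ← coe_add,
    coe_le_coe]
  exact (Nat.ceil_lt_add_one (zero_le (a := x.toNNReal))).le

theorem tsum_tsum_ite_add_lt (n : ℕ) :
    ∑' m : ℕ, ∑' j : ℕ, (if j + m < n then (1 : ℝ≥0∞) else 0)
      = ((∑ m ∈ range n, (n - m) : ℕ) : ℝ≥0∞) := by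
  have hinner : ∀ m, ∑' j : ℕ, (if j + m < n then (1 : ℝ≥0∞) else 0) = (n - m : ℕ) :=
    fun m => by
      rw [tsum_eq_sum (s := range (n - m)) fun j hj => if_neg (by simp at hj; omega),
        sum_congr rfl fun j hj => if_pos (by simp at hj; omega)]
      simp
  simp_rw [hinner]
  rw [tsum_eq_sum (s := range n) fun m hm => by simp at hm; simp [Nat.sub_eq_zero_of_le hm]]
  push_cast
  rfl

theorem natCast_lt_iSup_natCast_sub_iff (t : ℕ → ℕ) (m : ℕ) :
    (m : ℝ≥0∞) < ⨆ j : ℕ, ((t j : ℝ≥0∞) - j) ↔ ∃ j, j + m < t j := by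
  simp_rw [lt_iSup_iff, ← natCast_sub, Nat.cast_lt]
  exact exists_congr fun j => by omega

theorem prod_one_sub_mul_one_add_sum_le {ι : Type*} (s : Finset ι) (p : ι → ℝ≥0∞)
    (hp : ∀ i ∈ s, p i ≤ 1) : (∏ i ∈ s, (1 - p i)) * (1 + ∑ i ∈ s, p i) ≤ 1 := by
  classical
  induction s using Finset.induction_on with
  | empty => simp
  | insert i s hi ih =>
    rw [prod_insert hi, sum_insert hi]
    have hpi : p i ≤ 1 := hp i (mem_insert_self i s)
    have ih := ih fun j hj => hp j (mem_insert_of_mem hj)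
    have hP : ∏ j ∈ s, (1 - p j) ≤ 1 := prod_le_one' fun j _ => tsub_le_self
    calc (1 - p i) * (∏ j ∈ s, (1 - p j)) * (1 + (p i + ∑ j ∈ s, p j))
        = (1 - p i) * ((∏ j ∈ s, (1 - p j)) * (1 + ∑ j ∈ s, p j))
          + (1 - p i) * (∏ j ∈ s, (1 - p j)) * p i := by ring
      _ ≤ (1 - p i) * 1 + 1 * 1 * p i := by gcongr; exact tsub_le_self
      _ = 1 := by rw [mul_one, one_mul, one_mul, tsub_add_cancel_of_le hpi]

theorem min_le_two_mul_of_one_sub_mul_one_add_le {u s : ℝ≥0∞} (hu : u ≤ 1)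
    (h : (1 - u) * (1 + s) ≤ 1) : min s 1 ≤ 2 * u := by
  have key : 1 + min s 1 ≤ 1 + 2 * u :=
    calc 1 + min s 1 = (1 - u) * (1 + min s 1) + u * (1 + min s 1) := by
          rw [← add_mul, tsub_add_cancel_of_le hu, one_mul]
      _ ≤ 1 + u * 2 := by
          gcongr
          · exact le_trans (by gcongr; exact min_le_left _ _) h
          · exact (by gcongr; exact min_le_right _ _ : 1 + min s 1 ≤ 1 + 1).trans_eq
              one_add_one_eq_two
      _ = 1 + 2 * u := by rw [mul_comm]
  exact (ENNReal.add_le_add_iff_left one_ne_top).mp key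

theorem tsum_min_tail_one_eq_top {a : ℕ → ℝ≥0∞} (ha : ∀ k, a k ≠ ∞)
    (h : ∑' m, ∑' j, a (j + m) = ∞) : ∑' m, min (∑' j, a (j + m)) 1 = ∞ := by
  by_cases htop : ∑' k, a k = ∞
  · have htail : ∀ m, ∑' j, a (j + m) = ∞ := fun m => by
      rw [← ENNReal.summable.sum_add_tsum_nat_add' (k := m)] at htop
      exact (add_eq_top.mp htop).resolve_left (sum_ne_top.mpr fun k _ => ha k)
    simp [htail]
  · set C := max (∑' k, a k) 1
    have hle : ∀ m, ∑' j, a (j + m) ≤ C * min (∑' j, a (j + m)) 1 := fun m => by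
      rcases le_total (∑' j, a (j + m)) 1 with h1 | h1
      · rw [min_eq_left h1]
        exact le_mul_of_one_le_left' (le_max_right _ _)
      · rw [min_eq_right h1, mul_one]
        exact (tsum_comp_le_tsum_of_injective (add_left_injective m) a).trans (le_max_left _ _)
    by_contra hfin
    refine ne_top_of_le_ne_top (mul_ne_top (max_ne_top htop one_ne_top) hfin) ?_ h
    exact (ENNReal.tsum_le_tsum hle).trans_eq ENNReal.tsum_mul_left

theorem tsum_eq_top_iff_of_le_tail_of_min_tail_le {a u : ℕ → ℝ≥0∞} (ha : ∀ k, a k ≠ ∞)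
    (hle : ∀ m, u m ≤ ∑' j, a (j + m)) (hge : ∀ m, min (∑' j, a (j + m)) 1 ≤ 2 * u m) :
    ∑' m, u m = ∞ ↔ ∑' m, ∑' j, a (j + m) = ∞ := by
  constructor
  · intro h
    exact top_le_iff.mp (h ▸ ENNReal.tsum_le_tsum hle)
  · intro h
    by_contra hfin
    refine ne_top_of_le_ne_top (mul_ne_top (ofNat_ne_top (n := 2)) hfin) ?_
      (tsum_min_tail_one_eq_top ha h)
    exact (ENNReal.tsum_le_tsum hge).trans_eq ENNReal.tsum_mul_left

end ENNReal

section

variable {Ω : Type*} [MeasurableSpace Ω] {μ : Measure Ω}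

theorem tsum_measure_natCast_lt_eq_lintegral {f : Ω → ℝ≥0∞} (hf : Measurable f) :
    ∑' m : ℕ, μ {ω | (m : ℝ≥0∞) < f ω}
      = ∫⁻ ω, ∑' m : ℕ, (if (m : ℝ≥0∞) < f ω then (1 : ℝ≥0∞) else 0) ∂μ := by
  have hmeas : ∀ m : ℕ, MeasurableSet {ω | (m : ℝ≥0∞) < f ω} :=
    fun m => measurableSet_lt measurable_const hf
  calc ∑' m : ℕ, μ {ω | (m : ℝ≥0∞) < f ω}
      = ∑' m : ℕ, ∫⁻ ω, {ω | (m : ℝ≥0∞) < f ω}.indicator 1 ω ∂μ :=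
        tsum_congr fun m => (lintegral_indicator_one (hmeas m)).symm
    _ = _ := by
        rw [← lintegral_tsum fun m => (measurable_one.indicator (hmeas m)).aemeasurable]
        simp only [Set.indicator_apply, Set.mem_ofPred_eq, Pi.one_apply]

theorem lintegral_eq_top_iff_tsum_measure_natCast_lt [IsFiniteMeasure μ] {f : Ω → ℝ≥0∞}
    (hf : Measurable f) :
    ∫⁻ ω, f ω ∂μ = ∞ ↔ ∑' m : ℕ, μ {ω | (m : ℝ≥0∞) < f ω} = ∞ := by
  rw [tsum_measure_natCast_lt_eq_lintegral hf]
  constructor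
  · intro h
    exact top_le_iff.mp (h ▸ lintegral_mono fun ω => ENNReal.le_tsum_ite_natCast_lt (f ω))
  · intro h
    have := lintegral_mono (μ := μ) fun ω => ENNReal.tsum_ite_natCast_lt_le_add_one (f ω)
    rw [h, lintegral_add_right _ measurable_const, lintegral_one, top_le_iff,
      ENNReal.add_eq_top] at this
    exact this.resolve_right (measure_ne_top μ _)

theorem tsum_tsum_measure_add_lt_eq_lintegral {X : Ω → ℕ} (hX : Measurable X) :
    ∑' m : ℕ, ∑' j : ℕ, μ {ω | j + m < X ω}
      = ∫⁻ ω, ((∑ m ∈ range (X ω), (X ω - m) : ℕ) : ℝ≥0∞) ∂μ := by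
  have hmeas : ∀ m j : ℕ, MeasurableSet {ω | j + m < X ω} :=
    fun m j => measurableSet_lt measurable_const hX
  calc ∑' m : ℕ, ∑' j : ℕ, μ {ω | j + m < X ω}
      = ∑' m : ℕ, ∑' j : ℕ, ∫⁻ ω, {ω | j + m < X ω}.indicator 1 ω ∂μ := by
        simp_rw [lintegral_indicator_one (hmeas _ _)]
    _ = ∑' m : ℕ, ∫⁻ ω, ∑' j : ℕ, {ω | j + m < X ω}.indicator 1 ω ∂μ := tsum_congr fun m =>
        (lintegral_tsum fun j => (measurable_one.indicator (hmeas m j)).aemeasurable).symm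
    _ = ∫⁻ ω, ∑' m : ℕ, ∑' j : ℕ, {ω | j + m < X ω}.indicator 1 ω ∂μ :=
        (lintegral_tsum fun m => (Measurable.tsum fun j =>
          measurable_one.indicator (hmeas m j)).aemeasurable).symm
    _ = _ := lintegral_congr fun ω => by
        simp only [Set.indicator_apply, Set.mem_ofPred_eq, Pi.one_apply]
        exact ENNReal.tsum_tsum_ite_add_lt (X ω)

theorem tsum_tsum_measure_add_lt_eq_top_iff {X : Ω → ℕ} (hX : Measurable X) :
    ∑' m : ℕ, ∑' j : ℕ, μ {ω | j + m < X ω} = ∞ ↔ ∫⁻ ω, (X ω : ℝ≥0∞) ^ 2 ∂μ = ∞ := by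
  have hle : ∀ n : ℕ, ((∑ m ∈ range n, (n - m) : ℕ) : ℝ≥0∞) ≤ (n : ℝ≥0∞) ^ 2 := fun n => by
    have := sum_range_sub_mul_two n
    exact_mod_cast (by nlinarith : ∑ m ∈ range n, (n - m) ≤ n ^ 2)
  have hge : ∀ n : ℕ, (n : ℝ≥0∞) ^ 2 ≤ 2 * ((∑ m ∈ range n, (n - m) : ℕ) : ℝ≥0∞) := fun n => by
    have := sum_range_sub_mul_two n
    exact_mod_cast (by nlinarith : n ^ 2 ≤ 2 * ∑ m ∈ range n, (n - m))
  rw [tsum_tsum_measure_add_lt_eq_lintegral hX]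
  constructor
  · intro h
    exact top_le_iff.mp (h ▸ lintegral_mono fun ω => hle (X ω))
  · intro h
    by_contra hfin
    refine ne_top_of_le_ne_top (ENNReal.mul_ne_top (ENNReal.ofNat_ne_top (n := 2)) hfin) ?_ h
    exact (lintegral_mono fun ω => hge (X ω)).trans_eq
      (lintegral_const_mul' _ _ ENNReal.ofNat_ne_top)

end

namespace ProbabilityTheory.iIndepFun

variable {ι Ω β : Type*} [MeasurableSpace Ω] [MeasurableSpace β] {μ : Measure Ω}
  {f : ι → Ω → β} {T : ι → Set β}

theorem one_sub_measure_iUnion_mul_one_add_tsum_le (hf : iIndepFun f μ)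
    (hfm : ∀ i, Measurable (f i)) (hT : ∀ i, MeasurableSet (T i)) :
    (1 - μ (⋃ i, f i ⁻¹' T i)) * (1 + ∑' i, μ (f i ⁻¹' T i)) ≤ 1 := by
  have := hf.isProbabilityMeasure
  rw [ENNReal.tsum_eq_iSup_sum, ENNReal.add_iSup, ENNReal.mul_iSup]
  refine iSup_le fun s => ?_
  have hinter : μ (⋂ i ∈ s, f i ⁻¹' (T i)ᶜ) = ∏ i ∈ s, (1 - μ (f i ⁻¹' T i)) := by
    rw [hf.measure_inter_preimage_eq_mul s fun i _ => (hT i).compl]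
    exact prod_congr rfl fun i _ => by
      rw [Set.preimage_compl, prob_compl_eq_one_sub (hfm i (hT i))]
  have hcompl : 1 - μ (⋃ i, f i ⁻¹' T i) ≤ μ (⋂ i ∈ s, f i ⁻¹' (T i)ᶜ) :=
    calc 1 - μ (⋃ i, f i ⁻¹' T i) ≤ μ (⋃ i, f i ⁻¹' T i)ᶜ :=
          tsub_le_iff_left.mpr (measure_univ.symm.trans_le (measure_univ_le_add_compl _))
      _ ≤ μ (⋂ i ∈ s, f i ⁻¹' (T i)ᶜ) := by
          refine measure_mono fun ω hω => ?_
          simp only [Set.compl_iUnion, Set.preimage_compl, Set.mem_iInter] at hω ⊢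
          exact fun i _ => hω i
  calc (1 - μ (⋃ i, f i ⁻¹' T i)) * (1 + ∑ i ∈ s, μ (f i ⁻¹' T i))
      ≤ (∏ i ∈ s, (1 - μ (f i ⁻¹' T i))) * (1 + ∑ i ∈ s, μ (f i ⁻¹' T i)) := by
        gcongr; exact hinter ▸ hcompl
    _ ≤ 1 := ENNReal.prod_one_sub_mul_one_add_sum_le _ _ fun i _ => prob_le_one

theorem min_tsum_measure_le_two_mul_measure_iUnion (hf : iIndepFun f μ)
    (hfm : ∀ i, Measurable (f i)) (hT : ∀ i, MeasurableSet (T i)) :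
    min (∑' i, μ (f i ⁻¹' T i)) 1 ≤ 2 * μ (⋃ i, f i ⁻¹' T i) :=
  have := hf.isProbabilityMeasure
  ENNReal.min_le_two_mul_of_one_sub_mul_one_add_le prob_le_one
    (hf.one_sub_measure_iUnion_mul_one_add_tsum_le hfm hT)

end ProbabilityTheory.iIndepFun

/-- For an `ℕ₀`-valued random variable `X` and independent copies
`X₀, X₁, X₂, …` of `X`, with `M := sup {-j + X_j : j ∈ ℕ₀}` (pointwise, in the
extended sense; note `M ≥ X₀ ≥ 0`), we have `𝔼(M) = ∞ ↔ 𝔼(X²) = ∞`. -/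
theorem discrete_pinning_sup_iff_second_moment
    {Ω : Type*} [MeasurableSpace Ω] (P : Measure Ω) [IsProbabilityMeasure P]
    (X : Ω → ℕ) (hX : Measurable X)
    (Xs : ℕ → Ω → ℕ) (hXs : ∀ j, Measurable (Xs j))
    (hindep : iIndepFun Xs P)
    (hident : ∀ j, IdentDistrib (Xs j) X P P)
    (M : Ω → ℝ≥0∞)
    (hM : ∀ ω, M ω = ⨆ j : ℕ, ((Xs j ω : ℝ≥0∞) - (j : ℝ≥0∞))) :
    (∫⁻ ω, M ω ∂P = ∞) ↔ (∫⁻ ω, ((X ω : ℝ≥0∞)) ^ 2 ∂P = ∞) := by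
  have hMm : Measurable M := by
    rw [funext hM]
    refine Measurable.iSup fun j => ?_
    have := hXs j
    fun_prop
  have hlevel : ∀ m : ℕ, {ω | (m : ℝ≥0∞) < M ω} = ⋃ j, Xs j ⁻¹' {t | j + m < t} :=
    fun m => by
      ext ω
      simp [hM, ENNReal.natCast_lt_iSup_natCast_sub_iff]
  have hprob : ∀ m j : ℕ, P (Xs j ⁻¹' {t | j + m < t}) = P {ω | j + m < X ω} :=
    fun m j => (hident j).measure_mem_eq .of_discrete
  rw [lintegral_eq_top_iff_tsum_measure_natCast_lt hMm, ← tsum_tsum_measure_add_lt_eq_top_iff hX]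
  simp_rw [hlevel]
  refine ENNReal.tsum_eq_top_iff_of_le_tail_of_min_tail_le
    (fun k => measure_ne_top P {ω | k < X ω})
    (fun m => (measure_iUnion_le _).trans_eq (tsum_congr (hprob m))) fun m => ?_
  simpa only [hprob] using hindep.min_tsum_measure_le_two_mul_measure_iUnion hXs
    (T := fun j => {t | j + m < t}) fun j => .of_discrete
end

section
/- Let $X$ be a random variable with values in $\mathbb{N}_0$ satisfying $\mathbb{E}(X^2) < \infty$, and let $X_0, X_1, X_2, \ldots$ be independent random variables each having the same distribution as $X$. Then for $M := \sup\{-j + X_j : j \in \mathbb{N}_0\}$ one has $\mathbb{E}(M) < \infty$. -/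
/-! Bound the supremum `M = supⱼ (Xⱼ - j)⁺` by the sum `∑ⱼ (Xⱼ - j)⁺`. Term by term, its
expectation only sees the common law of the `Xⱼ`, so it equals `𝔼 ∑ⱼ (X - j)⁺ ≤ 𝔼 X²`. -/

open MeasureTheory ProbabilityTheory
open scoped ENNReal

theorem ENNReal.tsum_natCast_sub_le_sq (n : ℕ) : ∑' j : ℕ, ((n : ℝ≥0∞) - j) ≤ (n : ℝ≥0∞) ^ 2 := by
  rw [tsum_eq_sum (s := Finset.range n) fun j hj => by
    rw [Finset.mem_range, not_lt] at hj
    exact tsub_eq_zero_of_le (by exact_mod_cast hj)]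
  calc ∑ j ∈ Finset.range n, ((n : ℝ≥0∞) - j)
      ≤ ∑ _j ∈ Finset.range n, (n : ℝ≥0∞) := Finset.sum_le_sum fun _ _ => tsub_le_self
    _ = (n : ℝ≥0∞) ^ 2 := by rw [Finset.sum_const, Finset.card_range, nsmul_eq_mul, sq]

section

variable {Ω ι : Type*} [MeasurableSpace Ω] {μ : Measure Ω}

theorem lintegral_iSup_le_tsum_lintegral [Countable ι] {f : ι → Ω → ℝ≥0∞}
    (hf : ∀ i, AEMeasurable (f i) μ) :
    ∫⁻ ω, ⨆ i, f i ω ∂μ ≤ ∑' i, ∫⁻ ω, f i ω ∂μ := by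
  rw [← lintegral_tsum hf]
  exact lintegral_mono fun ω => iSup_le fun i => ENNReal.le_tsum i

theorem tsum_lintegral_natCast_sub_le_lintegral_sq {X : Ω → ℕ} (hX : AEMeasurable X μ) :
    ∑' j : ℕ, ∫⁻ ω, ((X ω : ℝ≥0∞) - j) ∂μ ≤ ∫⁻ ω, (X ω : ℝ≥0∞) ^ 2 ∂μ := by
  have hmeas (j : ℕ) : AEMeasurable (fun ω => (X ω : ℝ≥0∞) - j) μ :=
    (measurable_from_top (f := fun n : ℕ => (n : ℝ≥0∞) - j)).comp_aemeasurable hX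
  rw [← lintegral_tsum hmeas]
  exact lintegral_mono fun ω => ENNReal.tsum_natCast_sub_le_sq (X ω)

end

theorem sup_finite_expectation_of_second_moment_finite_general
    {Ω : Type*} [MeasurableSpace Ω] (P : Measure Ω)
    (X : Ω → ℕ)
    (hX2 : ∫⁻ ω, ((X ω : ℝ≥0∞)) ^ 2 ∂P < ∞)
    (Xs : ℕ → Ω → ℕ)
    (hident : ∀ j, IdentDistrib (Xs j) X P P)
    (M : Ω → ℝ≥0∞)
    (hM : ∀ ω, M ω = ⨆ j : ℕ, ((Xs j ω : ℝ≥0∞) - (j : ℝ≥0∞))) :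
    ∫⁻ ω, M ω ∂P < ∞ := by
  calc ∫⁻ ω, M ω ∂P
      ≤ ∑' j : ℕ, ∫⁻ ω, ((Xs j ω : ℝ≥0∞) - j) ∂P := by
        simp_rw [hM]
        exact lintegral_iSup_le_tsum_lintegral fun j =>
          (measurable_from_top (f := fun n : ℕ => (n : ℝ≥0∞) - j)).comp_aemeasurable
            (hident j).aemeasurable_fst
    _ = ∑' j : ℕ, ∫⁻ ω, ((X ω : ℝ≥0∞) - j) ∂P :=
        tsum_congr fun j =>
          ((hident j).comp (measurable_from_top (f := fun n : ℕ => (n : ℝ≥0∞) - j))).lintegral_eq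
    _ ≤ ∫⁻ ω, (X ω : ℝ≥0∞) ^ 2 ∂P :=
        tsum_lintegral_natCast_sub_le_lintegral_sq (hident 0).aemeasurable_snd
    _ < ∞ := hX2

/-- For an `ℕ₀`-valued random variable `X` with `𝔼(X²) < ∞` and
independent copies `X₀, X₁, X₂, …` of `X`, the random variable
`M := sup {-j + X_j : j ∈ ℕ₀}` (pointwise, bounded below by `X₀ ≥ 0`)
satisfies `𝔼(M) < ∞`. -/
theorem sup_finite_expectation_of_second_moment_finite
    {Ω : Type*} [MeasurableSpace Ω] (P : Measure Ω) [IsProbabilityMeasure P]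
    (X : Ω → ℕ) (hX : Measurable X)
    (hX2 : ∫⁻ ω, ((X ω : ℝ≥0∞)) ^ 2 ∂P < ∞)
    (Xs : ℕ → Ω → ℕ) (hXs : ∀ j, Measurable (Xs j))
    (hindep : iIndepFun Xs P)
    (hident : ∀ j, IdentDistrib (Xs j) X P P)
    (M : Ω → ℝ≥0∞)
    (hM : ∀ ω, M ω = ⨆ j : ℕ, ((Xs j ω : ℝ≥0∞) - (j : ℝ≥0∞))) :
    ∫⁻ ω, M ω ∂P < ∞ :=
  sup_finite_expectation_of_second_moment_finite_general P X hX2 Xs hident M hM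
end

section
/- Let $X$ be a random variable with values in $\mathbb{N}_0$ and let $X_0, X_1, X_2, \ldots$ be independent random variables each having the same distribution as $X$. Set $M := \sup\{-j + X_j : j \in \mathbb{N}_0\}$ and $\alpha_k := \mathbb{P}(X \geq k)$ for $k \in \mathbb{N}$. Then for every $n \in \mathbb{N}$, $n \geq 1$, one has $\mathbb{P}(M \geq n) = 1 - \prod_{k=n}^{\infty} (1 - \alpha_k)$. -/
/-!
`M ω ≥ n` holds exactly when `X_j ω ≥ n + j` for some `j`, so `{M < n}` is the intersection of
the independent events `{X_j < n + j}`, whose probabilities are `1 - α_(n+j)`. Continuity of the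
measure from above turns the finite product formula given by independence into the infinite one.
-/

open MeasureTheory ProbabilityTheory Filter Finset Topology
open scoped ENNReal

lemma ENNReal.natCast_le_iSup_natCast_sub_iff (f : ℕ → ℕ) (n : ℕ) :
    (n : ℝ≥0∞) ≤ ⨆ j : ℕ, ((f j : ℝ≥0∞) - j) ↔ ∃ j, n + j ≤ f j := by
  simp_rw [← ENNReal.natCast_sub]
  constructor
  · intro h
    obtain _ | k := n
    · exact ⟨0, Nat.zero_le _⟩
    · obtain ⟨j, hj⟩ := lt_iSup_iff.mp ((Nat.cast_lt.mpr k.lt_succ_self).trans_le h)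
      exact ⟨j, by have := Nat.cast_lt.mp hj; omega⟩
  · rintro ⟨j, hj⟩
    exact le_iSup_of_le j (Nat.cast_le.mpr (by omega))

namespace ProbabilityTheory

variable {Ω ι : Type*} [MeasurableSpace Ω] {μ : Measure Ω}

lemma iIndepFun.iIndepSet_preimage {β : ι → Type*} [∀ i, MeasurableSpace (β i)]
    {f : ∀ i, Ω → β i} (hf : iIndepFun f μ) (hfm : ∀ i, Measurable (f i))
    {s : ∀ i, Set (β i)} (hs : ∀ i, MeasurableSet (s i)) :
    iIndepSet (fun i => f i ⁻¹' s i) μ :=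
  hf.iIndep.iIndepSets'.iIndepSet_of_mem (fun i => comap_measurable (f i) (hs i))
    fun i => hfm i (hs i)

lemma iIndepSet.tendsto_prod_measure_iInter [IsFiniteMeasure μ] {s : ℕ → Set Ω}
    (h : iIndepSet s μ) (hs : ∀ i, MeasurableSet (s i)) :
    Tendsto (fun N => ∏ i ∈ range N, μ (s i)) atTop (𝓝 (μ (⋂ i, s i))) := by
  simp_rw [← h.meas_biInter]
  rw [Set.iInter_eq_iInter_finset]
  refine (tendsto_measure_iInter_atTop (fun t => ?_) (fun t u htu => ?_)
    ⟨∅, measure_ne_top _ _⟩).comp tendsto_finset_range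
  · exact (t.measurableSet_biInter fun i _ => hs i).nullMeasurableSet
  · exact Set.biInter_subset_biInter_left htu

end ProbabilityTheory

theorem prob_sup_ge_eq_one_sub_prod_general
    {Ω : Type*} [MeasurableSpace Ω] (P : Measure Ω) [IsProbabilityMeasure P]
    (X : Ω → ℕ)
    (Xs : ℕ → Ω → ℕ) (hXs : ∀ j, Measurable (Xs j))
    (hindep : iIndepFun Xs P)
    (hident : ∀ j, IdentDistrib (Xs j) X P P)
    (M : Ω → ℝ≥0∞)
    (hM : ∀ ω, M ω = ⨆ j : ℕ, ((Xs j ω : ℝ≥0∞) - (j : ℝ≥0∞)))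
    (α : ℕ → ℝ) (hα : ∀ k, α k = (P {ω | k ≤ X ω}).toReal)
    (n : ℕ) :
    Tendsto (fun N : ℕ => ∏ k ∈ Finset.Ico n N, (1 - α k)) atTop
      (nhds (1 - (P {ω | (n : ℝ≥0∞) ≤ M ω}).toReal)) := by
  set A : ℕ → Set Ω := fun j => Xs j ⁻¹' Set.Ici (n + j)
  have hA : ∀ j, MeasurableSet (A j) := fun j => hXs j measurableSet_Ici
  have hindepA : iIndepSet (fun j => (A j)ᶜ) P :=
    hindep.iIndepSet_preimage hXs fun j => measurableSet_Ici.compl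
  have hMA : {ω | (n : ℝ≥0∞) ≤ M ω} = ⋃ j, A j := by
    ext ω
    simp only [hM, ENNReal.natCast_le_iSup_natCast_sub_iff, Set.mem_ofPred_eq, Set.mem_iUnion,
      Set.mem_preimage, Set.mem_Ici, A]
  have hPA : ∀ j, P.real (A j)ᶜ = 1 - α (n + j) := fun j => by
    rw [probReal_compl_eq_one_sub (hA j), hα, measureReal_def,
      (hident j).measure_mem_eq measurableSet_Ici]
    rfl
  rw [hMA, ← measureReal_def, ← probReal_compl_eq_one_sub (.iUnion hA), Set.compl_iUnion,
    ← tendsto_add_atTop_iff_nat n]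
  have hlim := (ENNReal.tendsto_toReal (measure_ne_top P _)).comp
    (hindepA.tendsto_prod_measure_iInter fun j => (hA j).compl)
  simpa [Function.comp_def, ENNReal.toReal_prod, ← measureReal_def, hPA, prod_Ico_eq_prod_range]
    using hlim

/-- For an `ℕ₀`-valued random variable `X`, independent copies
`X₀, X₁, X₂, …` of `X`, `M := sup {-j + X_j : j ∈ ℕ₀}` (pointwise) and
`α_k := P(X ≥ k)`, for every `n ≥ 1` one has
`P(M ≥ n) = 1 - ∏_{k=n}^∞ (1 - α_k)`, the infinite product being the limit
of the partial products. -/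
theorem prob_sup_ge_eq_one_sub_prod
    {Ω : Type*} [MeasurableSpace Ω] (P : Measure Ω) [IsProbabilityMeasure P]
    (X : Ω → ℕ) (hX : Measurable X)
    (Xs : ℕ → Ω → ℕ) (hXs : ∀ j, Measurable (Xs j))
    (hindep : iIndepFun Xs P)
    (hident : ∀ j, IdentDistrib (Xs j) X P P)
    (M : Ω → ℝ≥0∞)
    (hM : ∀ ω, M ω = ⨆ j : ℕ, ((Xs j ω : ℝ≥0∞) - (j : ℝ≥0∞)))
    (α : ℕ → ℝ) (hα : ∀ k, α k = (P {ω | k ≤ X ω}).toReal)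
    (n : ℕ) (hn : 1 ≤ n) :
    Tendsto (fun N : ℕ => ∏ k ∈ Finset.Ico n N, (1 - α k)) atTop
      (nhds (1 - (P {ω | (n : ℝ≥0∞) ≤ M ω}).toReal)) :=
  prob_sup_ge_eq_one_sub_prod_general P X Xs hXs hindep hident M hM α hα n
end

section
/- Let $X$ be a random variable with values in $\mathbb{N}_0$ such that $\mathbb{E}(X) < \infty$, and let $X_0, X_1, X_2, \ldots$ be independent random variables each having the same distribution as $X$. Set $M := \sup\{-j + X_j : j \in \mathbb{N}_0\}$ and $\alpha_k := \mathbb{P}(X \geq k)$. If $n \in \mathbb{N}$ satisfies $\sum_{k=n}^{\infty} \alpha_k \leq \tfrac{1}{2}$, then $\mathbb{P}(M \geq n) \geq \tfrac{1}{2} \sum_{k=n}^{\infty} \alpha_k$. -/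
/-!
The events `A j = {X_j ≥ n + j}` are independent, have probabilities `α (n + j)`, and each of them
forces `M ≥ n`. For independent events whose probabilities `p_j` sum to `s ≤ 1`, the union has
probability `1 - ∏ (1 - p_j) ≥ s / 2`, by the elementary inequality `∏ (1 - p_j) ≤ 1 - s / 2`.
Letting the number of events tend to infinity gives the claim.
-/

open MeasureTheory ProbabilityTheory Set Finset
open scoped ENNReal

theorem Finset.prod_one_sub_le_one_sub_sum_div_two {ι : Type*} (s : Finset ι) {p : ι → ℝ}
    (hp : ∀ i ∈ s, 0 ≤ p i) (hs : ∑ i ∈ s, p i ≤ 1) :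
    ∏ i ∈ s, (1 - p i) ≤ 1 - (∑ i ∈ s, p i) / 2 := by
  classical
  induction s using Finset.induction_on with
  | empty => simp
  | insert a s ha ih =>
    rw [Finset.sum_insert ha] at hs ⊢
    rw [Finset.prod_insert ha]
    have hpa := hp a (mem_insert_self a s)
    have hps : 0 ≤ ∑ i ∈ s, p i := Finset.sum_nonneg fun i hi => hp i (mem_insert_of_mem hi)
    have ih := ih (fun i hi => hp i (mem_insert_of_mem hi)) (by linarith)
    calc (1 - p a) * ∏ i ∈ s, (1 - p i) ≤ (1 - p a) * (1 - (∑ i ∈ s, p i) / 2) :=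
          mul_le_mul_of_nonneg_left ih (by linarith)
      _ ≤ 1 - (p a + ∑ i ∈ s, p i) / 2 := by nlinarith

theorem ENNReal.prod_one_sub_le_one_sub_sum_div_two {ι : Type*} (s : Finset ι) {p : ι → ℝ≥0∞}
    (hs : ∑ i ∈ s, p i ≤ 1) :
    ∏ i ∈ s, (1 - p i) ≤ 1 - (∑ i ∈ s, p i) / 2 := by
  have hp : ∀ i ∈ s, p i ≤ 1 := fun i hi => (single_le_sum (by simp) hi).trans hs
  have hp_ne_top : ∀ i ∈ s, p i ≠ ∞ := fun i hi => ne_top_of_le_ne_top one_ne_top (hp i hi)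
  have hhalf : (∑ i ∈ s, p i) / 2 ≤ 1 := ENNReal.half_le_self.trans hs
  rw [← toReal_le_toReal (prod_ne_top fun i _ => sub_ne_top one_ne_top) (sub_ne_top one_ne_top),
    toReal_prod, toReal_sub_of_le hhalf one_ne_top, toReal_div, toReal_sum hp_ne_top,
    prod_congr rfl fun i hi => toReal_sub_of_le (hp i hi) one_ne_top]
  simp only [toReal_one, toReal_ofNat]
  refine Finset.prod_one_sub_le_one_sub_sum_div_two s (fun i _ => toReal_nonneg) ?_
  rw [← toReal_sum hp_ne_top]
  exact toReal_le_of_le_ofReal zero_le_one (by simpa using hs)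

theorem ProbabilityTheory.iIndep.sum_measure_div_two_le_measure_biUnion {Ω ι : Type*}
    {mΩ : MeasurableSpace Ω} {P : Measure Ω} [IsProbabilityMeasure P]
    {m : ι → MeasurableSpace Ω} (hind : iIndep m P) (hm : ∀ i, m i ≤ mΩ)
    {A : ι → Set Ω} (hA : ∀ i, MeasurableSet[m i] (A i)) (s : Finset ι)
    (hs : ∑ i ∈ s, P (A i) ≤ 1) :
    (∑ i ∈ s, P (A i)) / 2 ≤ P (⋃ i ∈ s, A i) := by
  have hAΩ : ∀ i, MeasurableSet (A i) := fun i => hm i _ (hA i)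
  have hinter : P (⋂ i ∈ s, (A i)ᶜ) = ∏ i ∈ s, (1 - P (A i)) := by
    rw [hind.meas_biInter fun i _ => (hA i).compl]
    exact prod_congr rfl fun i _ => prob_compl_eq_one_sub (hAΩ i)
  have hunion : P (⋃ i ∈ s, A i) = 1 - ∏ i ∈ s, (1 - P (A i)) := by
    rw [← hinter, ← compl_iUnion₂, prob_compl_eq_one_sub (s.measurableSet_biUnion fun i _ => hAΩ i),
      ENNReal.sub_sub_cancel ENNReal.one_ne_top prob_le_one]
  rw [hunion]
  calc (∑ i ∈ s, P (A i)) / 2 = 1 - (1 - (∑ i ∈ s, P (A i)) / 2) :=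
        (ENNReal.sub_sub_cancel ENNReal.one_ne_top (ENNReal.half_le_self.trans hs)).symm
    _ ≤ 1 - ∏ i ∈ s, (1 - P (A i)) :=
        tsub_le_tsub_left (ENNReal.prod_one_sub_le_one_sub_sum_div_two s hs) 1

theorem ENNReal.natCast_le_iSup_natCast_sub {x : ℕ → ℕ} {n j : ℕ} (h : n + j ≤ x j) :
    (n : ℝ≥0∞) ≤ ⨆ i : ℕ, ((x i : ℝ≥0∞) - i) :=
  le_iSup_of_le j <| ENNReal.le_sub_of_add_le_right (natCast_ne_top j) (by exact_mod_cast h)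

theorem prob_sup_ge_ge_half_tail_sum_general
    {Ω : Type*} [MeasurableSpace Ω] (P : Measure Ω) [IsProbabilityMeasure P]
    (X : Ω → ℕ)
    (Xs : ℕ → Ω → ℕ) (hXs : ∀ j, Measurable (Xs j))
    (hindep : iIndepFun Xs P)
    (hident : ∀ j, IdentDistrib (Xs j) X P P)
    (M : Ω → ℝ≥0∞)
    (hM : ∀ ω, M ω = ⨆ j : ℕ, ((Xs j ω : ℝ≥0∞) - (j : ℝ≥0∞)))
    (α : ℕ → ℝ≥0∞) (hα : ∀ k, α k = P {ω | k ≤ X ω})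
    (n : ℕ)
    (hsum : ∑' k : ℕ, α (n + k) ≤ 1 / 2) :
    P {ω | (n : ℝ≥0∞) ≤ M ω} ≥ (1 / 2) * ∑' k : ℕ, α (n + k) := by
  set A : ℕ → Set Ω := fun j => Xs j ⁻¹' Ici (n + j)
  have hPA : ∀ j, P (A j) = α (n + j) := fun j => by
    rw [hα]; exact (hident j).measure_mem_eq measurableSet_Ici
  have hfinite : ∀ m, (1 / 2) * ∑ j ∈ range m, α (n + j) ≤ P {ω | (n : ℝ≥0∞) ≤ M ω} := by
    intro m
    have hs : ∑ j ∈ range m, P (A j) ≤ 1 := by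
      simp only [hPA]
      exact ((ENNReal.sum_le_tsum _).trans hsum).trans (by norm_num)
    calc (1 / 2) * ∑ j ∈ range m, α (n + j) = (∑ j ∈ range m, P (A j)) / 2 := by
          simp only [hPA, one_div, ENNReal.div_eq_inv_mul]
      _ ≤ P (⋃ j ∈ range m, A j) :=
          hindep.iIndep.sum_measure_div_two_le_measure_biUnion (fun j => (hXs j).comap_le)
            (fun j => ⟨Ici (n + j), measurableSet_Ici, rfl⟩) _ hs
      _ ≤ P {ω | (n : ℝ≥0∞) ≤ M ω} := measure_mono <| iUnion₂_subset fun j _ ω hω => by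
          rw [mem_ofPred_eq, hM]
          exact ENNReal.natCast_le_iSup_natCast_sub hω
  rw [ge_iff_le, ENNReal.tsum_eq_iSup_nat, ENNReal.mul_iSup]
  exact iSup_le hfinite

/-- For an `ℕ₀`-valued random variable `X` with `𝔼(X) < ∞`,
independent copies `X₀, X₁, X₂, …` of `X`, `M := sup {-j + X_j : j ∈ ℕ₀}`
(pointwise) and `α_k := P(X ≥ k)`: if `n` satisfies `∑_{k=n}^∞ α_k ≤ 1/2`,
then `P(M ≥ n) ≥ (1/2) ∑_{k=n}^∞ α_k`. -/
theorem prob_sup_ge_ge_half_tail_sum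
    {Ω : Type*} [MeasurableSpace Ω] (P : Measure Ω) [IsProbabilityMeasure P]
    (X : Ω → ℕ) (hX : Measurable X)
    (hEX : ∫⁻ ω, (X ω : ℝ≥0∞) ∂P < ∞)
    (Xs : ℕ → Ω → ℕ) (hXs : ∀ j, Measurable (Xs j))
    (hindep : iIndepFun Xs P)
    (hident : ∀ j, IdentDistrib (Xs j) X P P)
    (M : Ω → ℝ≥0∞)
    (hM : ∀ ω, M ω = ⨆ j : ℕ, ((Xs j ω : ℝ≥0∞) - (j : ℝ≥0∞)))
    (α : ℕ → ℝ≥0∞) (hα : ∀ k, α k = P {ω | k ≤ X ω})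
    (n : ℕ) (hn : 1 ≤ n)
    (hsum : ∑' k : ℕ, α (n + k) ≤ 1 / 2) :
    P {ω | (n : ℝ≥0∞) ≤ M ω} ≥ (1 / 2) * ∑' k : ℕ, α (n + k) :=
  prob_sup_ge_ge_half_tail_sum_general P X Xs hXs hindep hident M hM α hα n hsum
end
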